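/- Under the hypotheses of the main theorem (Ω bounded convex, G > 0 locally integrable, f ∈ L¹ with Radon transform over Ω depending only on distance to the nearest parallel supporting hyperplane), the first-moment function g(ξ) = ∫_{ℝⁿ} ⟨x, ξ⟩ f(x) dx satisfies g(ξ) = (K/2)(r₂(ξ) + r₁(ξ)) for all unit vectors ξ, where K = ∫_Ω f and r₁(ξ), r₂(ξ) are the infimum and supremum of ⟨x,ξ⟩ over Ω. -/

import Mathlib

/-!
Slice space by the hyperplanes `⟪x, ξ⟫ = t`. By Fubini, `∫ f = ∫ R t` and
`∫ ⟪x, ξ⟫ f x = ∫ t * R t`, where `R t` integrates `f` over the hyperplane. Between `r₁ = inf ⟪Ω, ξ⟫` and `r₂ = sup ⟪Ω, ξ⟫`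
every slice of the convex open set `Ω` is nonempty and relatively open, hence of positive measure,
so the hypothesis makes `R t` a function of `min (t - r₁) (r₂ - t)`; outside `(r₁, r₂)` it vanishes.
Thus `R` is symmetric about `(r₁ + r₂) / 2`, and the reflection `t ↦ r₁ + r₂ - t` turns
`∫ t * R t` into `(r₁ + r₂) ∫ R - ∫ t * R t`.
-/

open MeasureTheory Set
open scoped MeasureTheory RealInnerProductSpace
open Module

section Real

lemma IsOpen.mem_Ioo_csInf_csSup {S : Set ℝ} (hS : IsOpen S) (hb : Bornology.IsBounded S)
    {x : ℝ} (hx : x ∈ S) : x ∈ Ioo (sInf S) (sSup S) := by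
  obtain ⟨l, u, ⟨hl, hu⟩, hsub⟩ := mem_nhds_iff_exists_Ioo_subset.1 (hS.mem_nhds hx)
  constructor
  · calc sInf S ≤ (l + x) / 2 := csInf_le hb.bddBelow (hsub ⟨by linarith, by linarith⟩)
      _ < x := by linarith
  · calc x < (x + u) / 2 := by linarith
      _ ≤ sSup S := le_csSup hb.bddAbove (hsub ⟨by linarith, by linarith⟩)

lemma Set.OrdConnected.mem_of_mem_Ioo_csInf_csSup {S : Set ℝ} (hS : S.OrdConnected) {t : ℝ}
    (ht : t ∈ Ioo (sInf S) (sSup S)) : t ∈ S := by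
  rcases S.eq_empty_or_nonempty with rfl | hne
  · simp at ht
  obtain ⟨a, ha, hat⟩ := exists_lt_of_csInf_lt hne ht.1
  obtain ⟨b, hb, htb⟩ := exists_lt_of_lt_csSup hne ht.2
  exact hS.out ha hb ⟨hat.le, htb.le⟩

lemma apply_sub_eq_of_eq_comp_min {F H : ℝ → ℝ} {a b c : ℝ} (hc : c ≠ 0)
    (hin : ∀ t ∈ Ioo a b, c * F t = H (min (t - a) (b - t)))
    (hout : ∀ t ∉ Ioo a b, F t = 0) (t : ℝ) : F (a + b - t) = F t := by
  by_cases ht : t ∈ Ioo a b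
  · have hrefl : a + b - t ∈ Ioo a b := ⟨by linarith [ht.2], by linarith [ht.1]⟩
    apply mul_left_cancel₀ hc
    rw [hin t ht, hin _ hrefl, min_comm]
    congr 2 <;> ring
  · have hrefl : a + b - t ∉ Ioo a b := fun h => ht ⟨by linarith [h.2], by linarith [h.1]⟩
    rw [hout t ht, hout _ hrefl]

theorem integral_mul_eq_half_mul_integral_of_symm {F : ℝ → ℝ} {a : ℝ} (hF : Integrable F)
    (htF : Integrable fun t => t * F t) (hsymm : ∀ t, F (a - t) = F t) :
    ∫ t, t * F t = a / 2 * ∫ t, F t := by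
  have hreflect : ∫ t, t * F t = ∫ t, (a * F t - t * F t) := by
    rw [← integral_sub_left_eq_self (fun t => t * F t) volume a]
    simp only [hsymm, sub_mul]
  rw [integral_sub (hF.const_mul a) htF, integral_const_mul] at hreflect
  linarith

end Real

section InnerProductSpace

variable {E : Type*} [NormedAddCommGroup E] [InnerProductSpace ℝ E] {ξ : E}

lemma inner_smul_add_orthogonal (hξ : ‖ξ‖ = 1) (t : ℝ) (y : (ℝ ∙ ξ)ᗮ) :
    ⟪t • ξ + y, ξ⟫ = t := by
  rw [inner_add_left, real_inner_smul_left, real_inner_self_eq_norm_sq, hξ,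
    Submodule.mem_orthogonal_singleton_iff_inner_left.mp y.2]
  ring

lemma isometry_smul_add_orthogonal (t : ℝ) :
    Isometry fun y : (ℝ ∙ ξ)ᗮ => t • ξ + (y : E) :=
  Isometry.of_dist_eq fun y₁ y₂ => by simp [dist_eq_norm]

lemma range_smul_add_orthogonal (hξ : ‖ξ‖ = 1) (t : ℝ) :
    range (fun y : (ℝ ∙ ξ)ᗮ => t • ξ + (y : E)) = {x | ⟪x, ξ⟫ = t} := by
  refine Subset.antisymm (range_subset_iff.2 (inner_smul_add_orthogonal hξ t)) fun x hx => ?_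
  have hy : x - t • ξ ∈ (ℝ ∙ ξ)ᗮ := by
    rw [Submodule.mem_orthogonal_singleton_iff_inner_left, inner_sub_left,
      real_inner_smul_left, real_inner_self_eq_norm_sq, hξ, show ⟪x, ξ⟫ = t from hx]
    ring
  exact ⟨⟨_, hy⟩, add_sub_cancel _ _⟩

lemma isOpen_image_inner (hξ : ξ ≠ 0) {Ω : Set E} (hΩ : IsOpen Ω) :
    IsOpen ((⟪·, ξ⟫) '' Ω) := by
  refine isOpen_iff_mem_nhds.2 ?_
  rintro _ ⟨x, hx, rfl⟩
  have hline : Continuous fun u : ℝ => x + ((u - ⟪x, ξ⟫) / ‖ξ‖ ^ 2) • ξ := by fun_prop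
  refine Filter.mem_of_superset (hline.continuousAt.preimage_mem_nhds ?_) fun u hu => ⟨_, hu, ?_⟩
  · simpa using hΩ.mem_nhds hx
  · have : ‖ξ‖ ≠ 0 := norm_ne_zero_iff.2 hξ
    simp only [inner_add_left, real_inner_smul_left, real_inner_self_eq_norm_sq]
    field_simp
    ring

lemma isBounded_image_inner {Ω : Set E} (hΩ : Bornology.IsBounded Ω) (ξ : E) :
    Bornology.IsBounded ((⟪·, ξ⟫) '' Ω) := by
  simpa [innerSL_apply_apply, real_inner_comm] using (innerSL ℝ ξ).lipschitz.isBounded_image hΩ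

lemma convex_image_inner {Ω : Set E} (hΩ : Convex ℝ Ω) (ξ : E) : Convex ℝ ((⟪·, ξ⟫) '' Ω) :=
  hΩ.is_linear_image ⟨fun x y => inner_add_left x y ξ, fun c x => real_inner_smul_left x ξ c⟩

lemma finrank_orthogonal_span_singleton_eq_sub_one [FiniteDimensional ℝ E] (hξ : ξ ≠ 0) :
    finrank ℝ (ℝ ∙ ξ)ᗮ = finrank ℝ E - 1 := by
  have := (ℝ ∙ ξ).finrank_add_finrank_orthogonal
  rw [finrank_span_singleton hξ] at this
  omega

end InnerProductSpace

section Slicing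

variable {E : Type*} [NormedAddCommGroup E] [InnerProductSpace ℝ E] [FiniteDimensional ℝ E]
  [MeasurableSpace E] [BorelSpace E] {ξ : E}

noncomputable def orthogonalSplitting (hξ : ‖ξ‖ = 1) : WithLp 2 (ℝ × (ℝ ∙ ξ)ᗮ) ≃ₗᵢ[ℝ] E :=
  (LinearIsometryEquiv.withLpProdCongr 2 (LinearIsometryEquiv.toSpanUnitSingleton ξ hξ)
    (LinearIsometryEquiv.refl ℝ _)).trans (ℝ ∙ ξ).orthogonalDecomposition.symm

noncomputable def hyperplaneCoords (hξ : ‖ξ‖ = 1) : ℝ × (ℝ ∙ ξ)ᗮ ≃ᵐ E :=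
  (MeasurableEquiv.toLp 2 _).trans (orthogonalSplitting hξ).toMeasurableEquiv

lemma hyperplaneCoords_apply (hξ : ‖ξ‖ = 1) (p : ℝ × (ℝ ∙ ξ)ᗮ) :
    hyperplaneCoords hξ p = p.1 • ξ + p.2 := by
  simp [hyperplaneCoords, orthogonalSplitting]

lemma measurePreserving_hyperplaneCoords (hξ : ‖ξ‖ = 1) :
    MeasurePreserving (hyperplaneCoords hξ) :=
  (orthogonalSplitting hξ).measurePreserving.comp (WithLp.volume_preserving_toLp ℝ (ℝ ∙ ξ)ᗮ)

noncomputable def radon (ξ : E) (f : E → ℝ) (t : ℝ) : ℝ := ∫ y : (ℝ ∙ ξ)ᗮ, f (t • ξ + y)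

lemma integrable_comp_hyperplaneCoords (hξ : ‖ξ‖ = 1) {f : E → ℝ} (hf : Integrable f) :
    Integrable (f ∘ hyperplaneCoords hξ) (volume.prod volume) :=
  ((measurePreserving_hyperplaneCoords hξ).integrable_comp_emb
    (hyperplaneCoords hξ).measurableEmbedding).2 hf

lemma integrable_radon (hξ : ‖ξ‖ = 1) {f : E → ℝ} (hf : Integrable f) :
    Integrable (radon ξ f) := by
  have h := (integrable_comp_hyperplaneCoords hξ hf).integral_prod_left
  simp only [Function.comp_apply, hyperplaneCoords_apply] at h
  exact h

theorem integral_eq_integral_radon (hξ : ‖ξ‖ = 1) {f : E → ℝ} (hf : Integrable f) :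
    ∫ x, f x = ∫ t, radon ξ f t := calc
  ∫ x, f x = ∫ p, (f ∘ hyperplaneCoords hξ) p ∂(volume.prod volume) := by
    rw [← Measure.volume_eq_prod]
    exact ((measurePreserving_hyperplaneCoords hξ).integral_comp' f).symm
  _ = ∫ t, radon ξ f t := by
    rw [integral_prod _ (integrable_comp_hyperplaneCoords hξ hf)]
    simp [radon, hyperplaneCoords_apply]

lemma radon_inner_mul (hξ : ‖ξ‖ = 1) (f : E → ℝ) (t : ℝ) :
    radon ξ (fun x => ⟪x, ξ⟫ * f x) t = t * radon ξ f t := by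
  simp only [radon, inner_smul_add_orthogonal hξ, integral_const_mul]

theorem integral_inner_mul_eq_of_radon_symm (hξ : ‖ξ‖ = 1) {f : E → ℝ} (hf : Integrable f)
    (hg : Integrable fun x => ⟪x, ξ⟫ * f x) {a : ℝ}
    (hsymm : ∀ t, radon ξ f (a - t) = radon ξ f t) :
    ∫ x, ⟪x, ξ⟫ * f x = a / 2 * ∫ x, f x := by
  have htF : Integrable fun t => t * radon ξ f t :=
    (integrable_radon hξ hg).congr (.of_forall (radon_inner_mul hξ f))
  rw [integral_eq_integral_radon hξ hg, integral_eq_integral_radon hξ hf]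
  simp only [radon_inner_mul hξ]
  exact integral_mul_eq_half_mul_integral_of_symm (integrable_radon hξ hf) htF hsymm

lemma integrable_inner_mul_of_isBounded {Ω : Set E} (hΩ : Bornology.IsBounded Ω) {f : E → ℝ}
    (hf : Integrable f) (hsupp : ∀ x ∉ Ω, f x = 0) (ξ : E) :
    Integrable fun x => ⟪x, ξ⟫ * f x := by
  refine (integrableOn_iff_integrable_of_support_subset fun x hx => subset_closure ?_).1
    (hf.integrableOn.continuousOn_mul (by fun_prop) hΩ.isCompact_closure)
  by_contra hxΩ
  exact hx (by simp [hsupp x hxΩ])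

-- Mathlib's `μH[d]` is not normalised to Lebesgue measure on a `d`-dimensional space.
noncomputable def hyperplaneScale (ξ : E) : NNReal :=
  (μH[finrank ℝ (ℝ ∙ ξ)ᗮ] : Measure (ℝ ∙ ξ)ᗮ).addHaarScalarFactor volume

lemma hyperplaneScale_pos (ξ : E) : 0 < hyperplaneScale ξ :=
  Measure.addHaarScalarFactor_pos_of_isAddHaarMeasure _ _

lemma setIntegral_hyperplane_hausdorffMeasure (hξ : ‖ξ‖ = 1) (f : E → ℝ) (t : ℝ) :
    ∫ x in {x | ⟪x, ξ⟫ = t}, f x ∂μH[finrank ℝ (ℝ ∙ ξ)ᗮ] = hyperplaneScale ξ * radon ξ f t := by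
  have hj := isometry_smul_add_orthogonal (ξ := ξ) t
  rw [← range_smul_add_orthogonal hξ t, ← hj.map_hausdorffMeasure (Or.inl (Nat.cast_nonneg _)),
    hj.isClosedEmbedding.measurableEmbedding.integral_map,
    Measure.isAddLeftInvariant_eq_smul μH[_] volume, integral_smul_nnreal_measure]
  rfl

lemma setIntegral_inter_hyperplane_hausdorffMeasure (hξ : ‖ξ‖ = 1) {Ω : Set E} {f : E → ℝ}
    (hsupp : ∀ x ∉ Ω, f x = 0) (t : ℝ) :
    ∫ x in Ω ∩ {x | ⟪x, ξ⟫ = t}, f x ∂μH[finrank ℝ (ℝ ∙ ξ)ᗮ] = hyperplaneScale ξ * radon ξ f t := by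
  have hH : MeasurableSet {x : E | ⟪x, ξ⟫ = t} :=
    (isClosed_eq (by fun_prop) (by fun_prop)).measurableSet
  rw [← setIntegral_eq_of_subset_of_forall_sdiff_eq_zero hH inter_subset_right
    fun x hx => hsupp x fun h => hx.2 ⟨h, hx.1⟩, setIntegral_hyperplane_hausdorffMeasure hξ]

lemma hausdorffMeasure_inter_hyperplane_pos (hξ : ‖ξ‖ = 1) {Ω : Set E} (hΩ : IsOpen Ω) {x : E}
    (hx : x ∈ Ω) : 0 < μH[finrank ℝ (ℝ ∙ ξ)ᗮ] (Ω ∩ {y | ⟪y, ξ⟫ = ⟪x, ξ⟫}) := by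
  have hj := isometry_smul_add_orthogonal (ξ := ξ) ⟪x, ξ⟫
  obtain ⟨y, hy⟩ : x ∈ range fun y : (ℝ ∙ ξ)ᗮ => ⟪x, ξ⟫ • ξ + (y : E) := by
    rw [range_smul_add_orthogonal hξ]; rfl
  rw [← range_smul_add_orthogonal hξ, ← hj.hausdorffMeasure_preimage (Or.inl (Nat.cast_nonneg _))]
  exact (hΩ.preimage hj.continuous).measure_pos _ ⟨y, by simpa [hy]⟩

end Slicing

theorem stmt12_general (n : ℕ) (Ω : Set (EuclideanSpace ℝ (Fin n)))
    (hopen : IsOpen Ω) (hconv : Convex ℝ Ω) (hbdd : Bornology.IsBounded Ω)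
    (G : ℝ → ℝ)
    (f : EuclideanSpace ℝ (Fin n) → ℝ) (hf : Integrable f)
    (hsupp : ∀ x, x ∉ Ω → f x = 0)
    (hradon : ∀ (ξ : EuclideanSpace ℝ (Fin n)) (t : ℝ), ‖ξ‖ = 1 →
      0 < μH[(n - 1 : ℕ)] (Ω ∩ {x : EuclideanSpace ℝ (Fin n) | ⟪x, ξ⟫ = t}) →
      ∫ x in Ω ∩ {x : EuclideanSpace ℝ (Fin n) | ⟪x, ξ⟫ = t}, f x ∂μH[(n - 1 : ℕ)]
        = G (min (t - sInf ((fun x => ⟪x, ξ⟫) '' Ω)) (sSup ((fun x => ⟪x, ξ⟫) '' Ω) - t))) :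
    ∀ ξ : EuclideanSpace ℝ (Fin n), ‖ξ‖ = 1 →
      ∫ x : EuclideanSpace ℝ (Fin n), ⟪x, ξ⟫ * f x
        = ((∫ x : EuclideanSpace ℝ (Fin n), f x) / 2) *
          (sSup ((fun x => ⟪x, ξ⟫) '' Ω) + sInf ((fun x => ⟪x, ξ⟫) '' Ω)) := by
  intro ξ hξ
  set S := (fun x => ⟪x, ξ⟫) '' Ω
  have hξ₀ : ξ ≠ 0 := ne_zero_of_norm_ne_zero (hξ ▸ one_ne_zero)
  have hd : finrank ℝ (ℝ ∙ ξ)ᗮ = n - 1 := by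
    rw [finrank_orthogonal_span_singleton_eq_sub_one hξ₀, finrank_euclideanSpace_fin]
  rw [← hd] at hradon
  have hslab : ∀ x ∈ Ω, ⟪x, ξ⟫ ∈ Ioo (sInf S) (sSup S) := fun x hx =>
    (isOpen_image_inner hξ₀ hopen).mem_Ioo_csInf_csSup (isBounded_image_inner hbdd ξ)
      (mem_image_of_mem _ hx)
  have hin : ∀ t ∈ Ioo (sInf S) (sSup S),
      hyperplaneScale ξ * radon ξ f t = G (min (t - sInf S) (sSup S - t)) := by
    intro t ht
    obtain ⟨x, hx, rfl⟩ :=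
      (convex_image_inner hconv ξ).ordConnected.mem_of_mem_Ioo_csInf_csSup ht
    rw [← hradon ξ _ hξ (hausdorffMeasure_inter_hyperplane_pos hξ hopen hx),
      setIntegral_inter_hyperplane_hausdorffMeasure hξ hsupp]
  have hout : ∀ t ∉ Ioo (sInf S) (sSup S), radon ξ f t = 0 := fun t ht => by
    refine (integral_congr_ae (.of_forall fun y => hsupp _ fun hy => ?_)).trans (integral_zero _ _)
    exact ht (inner_smul_add_orthogonal hξ t y ▸ hslab _ hy)
  rw [integral_inner_mul_eq_of_radon_symm hξ hf (integrable_inner_mul_of_isBounded hbdd hf hsupp ξ)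
    (apply_sub_eq_of_eq_comp_min (NNReal.coe_ne_zero.2 (hyperplaneScale_pos ξ).ne') hin hout)]
  ring

theorem stmt12 (n : ℕ) (hn : 2 ≤ n) (Ω : Set (EuclideanSpace ℝ (Fin n)))
    (hopen : IsOpen Ω) (hconv : Convex ℝ Ω) (hbdd : Bornology.IsBounded Ω)
    (hne : Ω.Nonempty)
    (G : ℝ → ℝ) (hGpos : ∀ t ≥ (0:ℝ), 0 < G t)
    (hGloc : ∀ r : ℝ, IntegrableOn G (Icc 0 r))
    (f : EuclideanSpace ℝ (Fin n) → ℝ) (hf : Integrable f)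
    (hsupp : ∀ x, x ∉ Ω → f x = 0)
    (hradon : ∀ (ξ : EuclideanSpace ℝ (Fin n)) (t : ℝ), ‖ξ‖ = 1 →
      0 < μH[(n - 1 : ℕ)] (Ω ∩ {x : EuclideanSpace ℝ (Fin n) | ⟪x, ξ⟫ = t}) →
      ∫ x in Ω ∩ {x : EuclideanSpace ℝ (Fin n) | ⟪x, ξ⟫ = t}, f x ∂μH[(n - 1 : ℕ)]
        = G (min (t - sInf ((fun x => ⟪x, ξ⟫) '' Ω)) (sSup ((fun x => ⟪x, ξ⟫) '' Ω) - t))) :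
    ∀ ξ : EuclideanSpace ℝ (Fin n), ‖ξ‖ = 1 →
      ∫ x : EuclideanSpace ℝ (Fin n), ⟪x, ξ⟫ * f x
        = ((∫ x : EuclideanSpace ℝ (Fin n), f x) / 2) *
          (sSup ((fun x => ⟪x, ξ⟫) '' Ω) + sInf ((fun x => ⟪x, ξ⟫) '' Ω)) :=
  stmt12_general n Ω hopen hconv hbdd G f hf hsupp hradon
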